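/- arXiv:hep-th/9801011 — 7 statements merged into one kernel-verified Lean document; each statement's English description precedes it below -/
import Mathlib

section
/- Let p and q be distinct primes, and let C_p and C_q denote the multiplicative groups of complex p-th and q-th roots of unity. Let H be a subgroup of the direct product U(1) × C_p × C_q whose intersection with the factor U(1) × {1} × {1} is trivial. Then H is cyclic and the order of H divides p·q (so any nontrivial such H is isomorphic to C_p, C_q, or C_{pq}). -/
/-!
A subgroup `H ≤ U(1) × (C_p × C_q)` meeting `U(1) × 1` trivially maps injectively to `C_p × C_q`
under the second projection. Since `p` and `q` are coprime, `C_p × C_q ≅ C_{pq}` is cyclic of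
order `p * q`, so `H` is isomorphic to a subgroup of a cyclic group of order `p * q`.
-/

namespace Subgroup

variable {G K : Type*} [Group G] [Group K] {H : Subgroup (G × K)}

theorem snd_comp_subtype_injective (hH : ∀ h ∈ H, h.2 = 1 → h = 1) :
    Function.Injective ((MonoidHom.snd G K).comp H.subtype) :=
  (injective_iff_map_eq_one _).2 fun h hh => Subtype.ext (hH h h.2 hh)

theorem isCyclic_of_forall_snd_eq_one [IsCyclic K] (hH : ∀ h ∈ H, h.2 = 1 → h = 1) :
    IsCyclic H :=
  isCyclic_of_injective _ (snd_comp_subtype_injective hH)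

theorem card_dvd_card_of_forall_snd_eq_one (hH : ∀ h ∈ H, h.2 = 1 → h = 1) :
    Nat.card H ∣ Nat.card K :=
  card_dvd_of_injective _ (snd_comp_subtype_injective hH)

end Subgroup

theorem Complex.isCyclic_rootsOfUnity_prod {m n : ℕ} [NeZero m] [NeZero n] (h : m.Coprime n) :
    IsCyclic (rootsOfUnity m ℂ × rootsOfUnity n ℂ) :=
  Group.isCyclic_prod_iff.2
    ⟨inferInstance, inferInstance, by rwa [card_rootsOfUnity, card_rootsOfUnity]⟩

/-- **Classification of possible central subgroups (Theorem 3.1).**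
Let `p` and `q` be distinct primes, `C_p` and `C_q` the groups of complex `p`-th and `q`-th
roots of unity.  Any subgroup `H` of `U(1) × C_p × C_q` meeting the factor `U(1) × 1 × 1`
trivially is cyclic of order dividing `p * q`. -/
theorem covering_groups_classification (p q : ℕ) (hp : p.Prime) (hq : q.Prime) (hpq : p ≠ q)
    (H : Subgroup (Circle × (rootsOfUnity p ℂ) × (rootsOfUnity q ℂ)))
    (htriv : ∀ h ∈ H, h.2.1 = 1 → h.2.2 = 1 → h = 1) :
    IsCyclic H ∧ Nat.card H ∣ p * q := by
  have : NeZero p := ⟨hp.ne_zero⟩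
  have : NeZero q := ⟨hq.ne_zero⟩
  have : IsCyclic (rootsOfUnity p ℂ × rootsOfUnity q ℂ) :=
    Complex.isCyclic_rootsOfUnity_prod ((Nat.coprime_primes hp hq).2 hpq)
  have hH : ∀ h ∈ H, h.2 = 1 → h = 1 := fun h hh h2 =>
    htriv h hh (congrArg Prod.fst h2) (congrArg Prod.snd h2)
  have hcard : Nat.card (rootsOfUnity p ℂ × rootsOfUnity q ℂ) = p * q := by
    rw [Nat.card_prod, Complex.card_rootsOfUnity, Complex.card_rootsOfUnity]
  exact ⟨Subgroup.isCyclic_of_forall_snd_eq_one hH,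
    hcard ▸ Subgroup.card_dvd_card_of_forall_snd_eq_one hH⟩
end

section
/- Let p and q be distinct primes. Let a₁,…,a_{p−1} and b₁,…,b_{q−1} be nonnegative integers (Dynkin indices), and set r_p = Σ_{j=1}^{p−1} j·a_j and r_q = Σ_{j=1}^{q−1} j·b_j. Let λ be an integer with λ ≡ r_p (mod p) and λ ≡ r_q (mod q). Let d_p and d_q be the natural numbers determined by the Weyl dimension formula, i.e., d_p · ∏_{l=0}^{p−1} l! = ∏_{0≤u<v≤p−1} (Σ_{j=u+1}^{v} (a_j + 1)) and d_q · ∏_{l=0}^{q−1} l! = ∏_{0≤u<v≤q−1} (Σ_{j=u+1}^{v} (b_j + 1)). Then p·q divides d_p · d_q · λ. -/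
/-!
Fix a prime `p` and put `ℓ k = ∑_{j=1}^k (a_j + 1)` (`weylPartialSum a k`), so that the factors
of the Weyl numerator are the differences `ℓ v - ℓ u` for `0 ≤ u < v < p`, while the denominator
`∏_{l<p} l!` is prime to `p`. If two of `ℓ 0, …, ℓ (p-1)` agree mod `p`, then `p` divides the
numerator and hence `d_p`. Otherwise `k ↦ ℓ k` is a bijection onto `ZMod p`, just like `k ↦ k`,
so `∑_k ℓ k ≡ ∑_k k`, i.e. `∑_{k<p} ∑_{j ≤ k} a_j = ∑_j (p - j) a_j ≡ 0`, which says `r_p ≡ 0`.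
Either way `p ∣ d_p r_p ≡ d_p λ`, and the same holds for `q`.
-/

open Finset

theorem sum_range_comp_eq_sum_univ {α β : Type*} [Fintype α] [AddCommMonoid β] {n : ℕ}
    (hn : Fintype.card α = n) {f : ℕ → α} (hf : Set.InjOn f (range n)) (g : α → β) :
    ∑ k ∈ range n, g (f k) = ∑ x, g x := by
  classical
  have himage : (range n).image f = univ :=
    eq_univ_of_card _ (by rw [card_image_of_injOn hf, card_range, hn])
  rw [← sum_image hf, himage]

theorem sum_range_sum_Icc_add_sum_Icc_mul (f : ℕ → ℕ) (n : ℕ) :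
    ∑ k ∈ range (n + 1), ∑ j ∈ Icc 1 k, f j + ∑ j ∈ Icc 1 n, j * f j =
      (n + 1) * ∑ j ∈ Icc 1 n, f j := by
  induction n with
  | zero => simp
  | succ n ih =>
    rw [sum_range_succ, sum_Icc_succ_top (by omega), sum_Icc_succ_top (by omega)]
    linear_combination ih

theorem Nat.Prime.not_dvd_prod_factorial_range {p : ℕ} (hp : p.Prime) :
    ¬ p ∣ ∏ l ∈ range p, l.factorial := by
  rw [hp.prime.dvd_finsetProd_iff]
  rintro ⟨l, hl, hdvd⟩
  exact absurd (hp.dvd_factorial.mp hdvd) (by simpa using hl)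

def weylPartialSum (a : ℕ → ℕ) (k : ℕ) : ℕ := ∑ j ∈ Icc 1 k, (a j + 1)

theorem weylPartialSum_eq (a : ℕ → ℕ) (k : ℕ) :
    weylPartialSum a k = k + ∑ j ∈ Icc 1 k, a j := by
  simp [weylPartialSum, sum_add_distrib, add_comm]

theorem weylPartialSum_add_sum_Icc (a : ℕ → ℕ) {u v : ℕ} (huv : u ≤ v) :
    weylPartialSum a u + ∑ j ∈ Icc (u + 1) v, (a j + 1) = weylPartialSum a v := by
  simp only [weylPartialSum, Icc_add_one_left_eq_Ioc]
  exact sum_Ioc_consecutive _ u.zero_le huv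

section

variable {p : ℕ} (a : ℕ → ℕ)

theorem Nat.Prime.dvd_of_weylPartialSum_modEq (hp : p.Prime) {dp : ℕ}
    (hdp : dp * ∏ l ∈ range p, l.factorial =
      ∏ v ∈ range p, ∏ u ∈ range v, ∑ j ∈ Icc (u + 1) v, (a j + 1))
    {u v : ℕ} (huv : u < v) (hv : v < p)
    (hmod : (weylPartialSum a u : ZMod p) = weylPartialSum a v) :
    p ∣ dp := by
  have hfactor : p ∣ ∑ j ∈ Icc (u + 1) v, (a j + 1) := by
    rw [← weylPartialSum_add_sum_Icc a huv.le, Nat.cast_add] at hmod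
    exact (ZMod.natCast_eq_zero_iff _ _).mp (add_eq_left.mp hmod.symm)
  have hnumerator : p ∣ dp * ∏ l ∈ range p, l.factorial := by
    rw [hdp]
    exact hfactor.trans <|
      (dvd_prod_of_mem (fun u => ∑ j ∈ Icc (u + 1) v, (a j + 1)) (mem_range.mpr huv)).trans <|
        dvd_prod_of_mem (fun v => ∏ u ∈ range v, ∑ j ∈ Icc (u + 1) v, (a j + 1))
          (mem_range.mpr hv)
  exact (hp.prime.dvd_or_dvd hnumerator).resolve_right hp.not_dvd_prod_factorial_range

theorem Nat.Prime.dvd_sum_mul_of_injOn_weylPartialSum (hp : p.Prime)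
    (hinj : Set.InjOn (fun k => (weylPartialSum a k : ZMod p)) (range p)) :
    p ∣ ∑ j ∈ Icc 1 (p - 1), j * a j := by
  have : Fact p.Prime := ⟨hp⟩
  have hcast_inj : Set.InjOn (Nat.cast : ℕ → ZMod p) (range p) := fun x hx y hy hxy => by
    simpa [ZMod.val_natCast_of_lt (mem_range.mp hx), ZMod.val_natCast_of_lt (mem_range.mp hy)]
      using congrArg ZMod.val hxy
  have hsum : ∑ k ∈ range p, (weylPartialSum a k : ZMod p) = ∑ k ∈ range p, (k : ZMod p) :=
    (sum_range_comp_eq_sum_univ (ZMod.card p) hinj id).trans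
      (sum_range_comp_eq_sum_univ (ZMod.card p) hcast_inj id).symm
  have hdouble : p ∣ ∑ k ∈ range p, ∑ j ∈ Icc 1 k, a j := by
    rw [← ZMod.natCast_eq_zero_iff]
    simp only [weylPartialSum_eq, Nat.cast_add, sum_add_distrib] at hsum
    push_cast at hsum ⊢
    exact add_eq_left.mp hsum
  have hidentity := sum_range_sum_Icc_add_sum_Icc_mul a (p - 1)
  rw [Nat.sub_add_cancel hp.one_le] at hidentity
  exact (Nat.dvd_add_right hdouble).mp (hidentity ▸ dvd_mul_right p _)

theorem Nat.Prime.dvd_dim_mul_sum_mul (hp : p.Prime) {dp : ℕ}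
    (hdp : dp * ∏ l ∈ range p, l.factorial =
      ∏ v ∈ range p, ∏ u ∈ range v, ∑ j ∈ Icc (u + 1) v, (a j + 1)) :
    p ∣ dp * ∑ j ∈ Icc 1 (p - 1), j * a j := by
  by_cases hinj : Set.InjOn (fun k => (weylPartialSum a k : ZMod p)) (range p)
  · exact dvd_mul_of_dvd_right (hp.dvd_sum_mul_of_injOn_weylPartialSum a hinj) dp
  · simp only [Set.InjOn, coe_range, Set.mem_Iio, not_forall] at hinj
    obtain ⟨u, hu, v, hv, hmod, hne⟩ := hinj
    refine dvd_mul_of_dvd_left ?_ _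
    rcases lt_or_gt_of_ne hne with huv | hvu
    · exact hp.dvd_of_weylPartialSum_modEq a hdp huv hv hmod
    · exact hp.dvd_of_weylPartialSum_modEq a hdp hvu hu hmod.symm

theorem Nat.Prime.intCast_dvd_dim_mul_of_modEq (hp : p.Prime) {dp : ℕ} {lam : ℤ}
    (hdp : dp * ∏ l ∈ range p, l.factorial =
      ∏ v ∈ range p, ∏ u ∈ range v, ∑ j ∈ Icc (u + 1) v, (a j + 1))
    (hlam : lam ≡ ((∑ j ∈ Icc 1 (p - 1), j * a j : ℕ) : ℤ) [ZMOD (p : ℤ)]) :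
    (p : ℤ) ∣ dp * lam := by
  rw [(hlam.mul_left dp).dvd_iff]
  exact_mod_cast hp.dvd_dim_mul_sum_mul a hdp

end

/-- **Theorem 4.4 (teilerdim).**
Let `p`, `q` be distinct primes. For an irreducible representation of `G_SM(p,q)` with
Dynkin indices `a₁,…,a_{p-1}` and `b₁,…,b_{q-1}`, sizes `r_p = ∑ j·a_j`, `r_q = ∑ j·b_j`,
dimensions `d_p`, `d_q` (given by the Weyl dimension formula) and winding number `λ`
satisfying the integrability conditions `λ ≡ r_p (mod p)` and `λ ≡ r_q (mod q)`, one has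
`p·q ∣ d_p·d_q·λ`. -/
theorem pq_divides_dim_mul_winding (p q : ℕ) (hp : p.Prime) (hq : q.Prime) (hpq : p ≠ q)
    (a b : ℕ → ℕ) (lam : ℤ) (dp dq : ℕ)
    (hdp : dp * ∏ l ∈ range p, Nat.factorial l =
      ∏ v ∈ range p, ∏ u ∈ range v, ∑ j ∈ Icc (u + 1) v, (a j + 1))
    (hdq : dq * ∏ l ∈ range q, Nat.factorial l =
      ∏ v ∈ range q, ∏ u ∈ range v, ∑ j ∈ Icc (u + 1) v, (b j + 1))
    (hlamp : lam ≡ ((∑ j ∈ Icc 1 (p - 1), j * a j : ℕ) : ℤ) [ZMOD (p : ℤ)])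
    (hlamq : lam ≡ ((∑ j ∈ Icc 1 (q - 1), j * b j : ℕ) : ℤ) [ZMOD (q : ℤ)]) :
    ((p : ℤ) * q) ∣ (dp : ℤ) * dq * lam := by
  have hcoprime : IsCoprime (p : ℤ) q :=
    Int.isCoprime_iff_gcd_eq_one.mpr (by exact_mod_cast (Nat.coprime_primes hp hq).mpr hpq)
  refine hcoprime.mul_dvd ?_ ?_
  · rw [mul_right_comm]
    exact dvd_mul_of_dvd_left (hp.intCast_dvd_dim_mul_of_modEq a hdp hlamp) _
  · rw [mul_assoc]
    exact dvd_mul_of_dvd_right (hq.intCast_dvd_dim_mul_of_modEq b hdq hlamq) _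
end

section
/- Let p be a prime. Let a₁,…,a_{p−1} be nonnegative integers, set r = Σ_{j=1}^{p−1} j·a_j, and let λ be an integer with λ ≡ r (mod p). Let d be the natural number determined by the Weyl dimension formula, i.e., d · ∏_{l=0}^{p−1} l! = ∏_{0≤u<v≤p−1} (Σ_{j=u+1}^{v} (a_j + 1)). Then p divides d·λ. -/
open Finset

/-- **Single-prime divisibility relation `p ∣ d·λ`.**
Let `p` be a prime, `a₁,…,a_{p-1}` Dynkin indices with representation size
`r = ∑ j·a_j` and dimension `d` given by the Weyl dimension formula.  If `λ ≡ r (mod p)`,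
then `p ∣ d·λ`. -/
theorem prime_divides_dim_mul_winding (p : ℕ) (hp : p.Prime) (a : ℕ → ℕ) (lam : ℤ) (d : ℕ)
    (hd : d * ∏ l ∈ range p, Nat.factorial l =
      ∏ v ∈ range p, ∏ u ∈ range v, ∑ j ∈ Icc (u + 1) v, (a j + 1))
    (hlam : lam ≡ ((∑ j ∈ Icc 1 (p - 1), j * a j : ℕ) : ℤ) [ZMOD (p : ℤ)]) :
    (p : ℤ) ∣ (d : ℤ) * lam := by
  haveI : Fact p.Prime := ⟨hp⟩
  set r : ℕ := ∑ j ∈ Icc 1 (p - 1), j * a j with hr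
  set S : ℕ → ℕ := fun u => ∑ j ∈ Ioc 0 u, (a j + 1) with hSdef
  have hScons : ∀ u v : ℕ, u ≤ v → S u + (∑ j ∈ Icc (u + 1) v, (a j + 1)) = S v := by
    intro u v huv
    rw [Finset.Icc_add_one_left_eq_Ioc]
    exact Finset.sum_Ioc_consecutive _ (Nat.zero_le u) huv
  by_cases hcase : ∃ v ∈ range p, ∃ u ∈ range v, (S u : ZMod p) = (S v : ZMod p)
  · -- collision case: p ∣ d
    obtain ⟨v, hv, u, hu, huv⟩ := hcase
    have huv' : u < v := mem_range.mp hu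
    have hdvd1 : p ∣ ∑ j ∈ Icc (u + 1) v, (a j + 1) := by
      have h1 := hScons u v huv'.le
      have h2 : ((S u : ℕ) : ZMod p) + ((∑ j ∈ Icc (u + 1) v, (a j + 1) : ℕ) : ZMod p)
          = ((S v : ℕ) : ZMod p) := by exact_mod_cast congrArg (Nat.cast : ℕ → ZMod p) h1
      rw [huv] at h2
      have hcast : ((∑ j ∈ Icc (u + 1) v, (a j + 1) : ℕ) : ZMod p) = 0 := by
        linear_combination h2
      exact (ZMod.natCast_eq_zero_iff _ _).mp hcast
    have hdvd1' : p ∣ ∏ u' ∈ range v, ∑ j ∈ Icc (u' + 1) v, (a j + 1) :=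
      dvd_trans hdvd1 (Finset.dvd_prod_of_mem (fun u' => ∑ j ∈ Icc (u' + 1) v, (a j + 1)) hu)
    have hdvd2 : p ∣ ∏ v ∈ range p, ∏ u ∈ range v, ∑ j ∈ Icc (u + 1) v, (a j + 1) :=
      dvd_trans hdvd1' (Finset.dvd_prod_of_mem
        (fun v => ∏ u ∈ range v, ∑ j ∈ Icc (u + 1) v, (a j + 1)) hv)
    rw [← hd] at hdvd2
    have hcop : Nat.Coprime p (∏ l ∈ range p, Nat.factorial l) := by
      apply Nat.Coprime.prod_right
      intro l hl
      exact (hp.coprime_iff_not_dvd).mpr fun h =>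
        absurd ((Nat.Prime.dvd_factorial hp).mp h) (not_le.mpr (mem_range.mp hl))
    have hpd : p ∣ d := hcop.dvd_of_dvd_mul_right hdvd2
    exact Dvd.dvd.mul_right (by exact_mod_cast hpd) lam
  · -- injective case: p ∣ r
    push_neg at hcase
    have hp1 : 1 ≤ p := hp.pos
    -- injectivity
    have hinj : Set.InjOn (fun u => (S u : ZMod p)) (range p) := by
      intro x hx y hy hxy
      rcases lt_trichotomy x y with h | h | h
      · exact absurd hxy (hcase y hy x (mem_range.mpr h))
      · exact h
      · exact absurd hxy.symm (hcase x hx y (mem_range.mpr h))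
    have hinj2 : Set.InjOn (fun u : ℕ => (u : ZMod p)) (range p) := by
      intro x hx y hy hxy
      have hx' := ZMod.val_cast_of_lt (n := p) (mem_range.mp hx)
      have hy' := ZMod.val_cast_of_lt (n := p) (mem_range.mp hy)
      have hv : (x : ZMod p).val = (y : ZMod p).val := congrArg ZMod.val hxy
      rwa [hx', hy'] at hv
    -- both images are all of ZMod p
    have himg : ∀ f : ℕ → ZMod p, Set.InjOn f (range p) →
        (range p).image f = Finset.univ := by
      intro f hf
      apply Finset.eq_of_subset_of_card_le (Finset.subset_univ _)
      rw [Finset.card_image_of_injOn hf, Finset.card_range, Finset.card_univ, ZMod.card]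
    have h1 : ∑ x ∈ (range p).image (fun u => (S u : ZMod p)), x
        = ∑ u ∈ range p, (S u : ZMod p) :=
      Finset.sum_image (g := fun u => (S u : ZMod p)) (f := fun x => x)
        (fun x hx y hy h => hinj hx hy h)
    have h2 : ∑ x ∈ (range p).image (fun u : ℕ => (u : ZMod p)), x
        = ∑ u ∈ range p, (u : ZMod p) :=
      Finset.sum_image (g := fun u : ℕ => (u : ZMod p)) (f := fun x => x)
        (fun x hx y hy h => hinj2 hx hy h)
    have hsum : ∑ u ∈ range p, (S u : ZMod p) = ∑ u ∈ range p, (u : ZMod p) := by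
      rw [← h1, ← h2, himg _ hinj, himg _ hinj2]
    -- swap the double sum in ℕ
    have hswap : ∑ u ∈ range p, S u = ∑ j ∈ Ioc 0 (p - 1), (p - j) * (a j + 1) := by
      rw [hSdef]
      rw [Finset.sum_comm' (t' := Ioc 0 (p - 1)) (s' := fun j => Ico j p)
        (fun u j => by simp only [mem_range, mem_Ioc, mem_Ico]; omega)]
      refine Finset.sum_congr rfl fun j hj => ?_
      rw [Finset.sum_const, Nat.card_Ico, smul_eq_mul]
    -- pointwise identity mod p
    have hpt : ∀ j ∈ Ioc 0 (p - 1),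
        (((p - j) * (a j + 1) : ℕ) : ZMod p) = -((j * a j : ℕ) : ZMod p) - ((j : ℕ) : ZMod p) := by
      intro j hj
      obtain ⟨hj0, hjp⟩ := mem_Ioc.mp hj
      have hjle : j ≤ p := by omega
      push_cast [Nat.cast_sub hjle, ZMod.natCast_self]
      ring
    have hIocrange : ∑ j ∈ Ioc 0 (p - 1), (j : ZMod p) = ∑ u ∈ range p, (u : ZMod p) := by
      have hins : range p = insert 0 (Ioc 0 (p - 1)) := by
        ext x; simp only [mem_range, mem_insert, mem_Ioc]; omega
      rw [hins, Finset.sum_insert (by simp)]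
      simp
    have hLHS : ∑ u ∈ range p, (S u : ZMod p)
        = -(r : ZMod p) - ∑ j ∈ Ioc 0 (p - 1), (j : ZMod p) := by
      rw [← Nat.cast_sum, hswap, Nat.cast_sum, Finset.sum_congr rfl hpt,
        Finset.sum_sub_distrib, Finset.sum_neg_distrib, hr,
        show Icc 1 (p - 1) = Ioc 0 (p - 1) from Finset.Icc_add_one_left_eq_Ioc 0 (p - 1)]
      push_cast
      ring
    have hmain : (∑ u ∈ range p, (u : ZMod p))
        = -(r : ZMod p) - ∑ u ∈ range p, (u : ZMod p) :=
      calc ∑ u ∈ range p, (u : ZMod p) = ∑ u ∈ range p, (S u : ZMod p) := hsum.symm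
        _ = -(r : ZMod p) - ∑ j ∈ Ioc 0 (p - 1), (j : ZMod p) := hLHS
        _ = -(r : ZMod p) - ∑ u ∈ range p, (u : ZMod p) := by rw [hIocrange]
    have h2A : (∑ u ∈ range p, (u : ZMod p)) * 2 = 0 := by
      have hg : ((∑ u ∈ range p, u) * 2 : ℕ) = (p * (p - 1) : ℕ) := Finset.sum_range_id_mul_two p
      calc (∑ u ∈ range p, (u : ZMod p)) * 2
          = (((∑ u ∈ range p, u) * 2 : ℕ) : ZMod p) := by push_cast; ring
        _ = ((p * (p - 1) : ℕ) : ZMod p) := by rw [hg]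
        _ = 0 := by rw [Nat.cast_mul, ZMod.natCast_self, zero_mul]
    have hrzero : (r : ZMod p) = 0 := by linear_combination hmain - h2A
    have hpr : (p : ℤ) ∣ (r : ℤ) := by
      exact_mod_cast (ZMod.natCast_eq_zero_iff _ _).mp hrzero
    have hplam : (p : ℤ) ∣ lam := by
      have h3 : (p : ℤ) ∣ (r : ℤ) - lam := Int.ModEq.dvd hlam
      have : lam = (r : ℤ) - ((r : ℤ) - lam) := by ring
      rw [this]
      exact dvd_sub hpr h3
    exact Dvd.dvd.mul_left hplam _
end

section
/- Let p be a prime and let a₁,…,a_{p−1} be nonnegative integers. Then p divides the product (Σ_{j=1}^{p−1} j·a_j) · ∏_{0≤u<v≤p−1} (Σ_{j=u+1}^{v} (a_j + 1)). -/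
/-!
Let `S k = ∑_{j ≤ k} (a_j + 1)` for `0 ≤ k < p`; the factors of the Weyl numerator are the
differences `S v - S u` with `u < v`. If two of the `p` partial sums agree mod `p`, then `p`
divides one of these factors. Otherwise `k ↦ S k` is a bijection onto `ZMod p`, as is `k ↦ k`,
so `∑_k (S k - k) = ∑_k ∑_{j ≤ k} a_j ≡ 0`; by Abel summation this sum is
`∑_j (p - j) a_j ≡ -∑_j j a_j`, so `p` divides the size.
-/

open Finset

theorem sum_range_sum_Icc_add_sum_Icc_nsmul {M : Type*} [AddCommMonoid M] (b : ℕ → M) (n : ℕ) :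
    ∑ k ∈ range (n + 1), ∑ j ∈ Icc 1 k, b j + ∑ j ∈ Icc 1 n, j • b j =
      (n + 1) • ∑ j ∈ Icc 1 n, b j := by
  induction n with
  | zero => simp
  | succ n ih =>
    rw [sum_range_succ, sum_Icc_succ_top (Nat.le_add_left 1 n),
      sum_Icc_succ_top (Nat.le_add_left 1 n) (fun j => j • b j), succ_nsmul _ (n + 1),
      nsmul_add, ← ih]
    abel

theorem Finset.sum_eq_sum_univ_of_injOn {ι α : Type*} [Fintype α] [AddCommMonoid α]
    {s : Finset ι} {f : ι → α} (hf : Set.InjOn f s) (hs : #s = Fintype.card α) :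
    ∑ i ∈ s, f i = ∑ x, x := by
  classical
  rw [← eq_univ_of_card _ ((card_image_of_injOn hf).trans hs), sum_image hf]

theorem ZMod.natCast_injOn_range (p : ℕ) : Set.InjOn (Nat.cast : ℕ → ZMod p) (range p) := by
  intro x hx y hy hxy
  rwa [ZMod.natCast_eq_natCast_iff', Nat.mod_eq_of_lt (mem_range.1 hx),
    Nat.mod_eq_of_lt (mem_range.1 hy)] at hxy

theorem sum_Icc_one_add_sum_Icc_succ {M : Type*} [AddCommMonoid M] (f : ℕ → M) {u v : ℕ}
    (huv : u ≤ v) : ∑ j ∈ Icc 1 u, f j + ∑ j ∈ Icc (u + 1) v, f j = ∑ j ∈ Icc 1 v, f j := by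
  simpa only [← Icc_add_one_left_eq_Ioc, zero_add] using sum_Ioc_consecutive f (Nat.zero_le u) huv

section

variable (p : ℕ) (a : ℕ → ℕ)

theorem dvd_size_of_injOn [NeZero p]
    (h : Set.InjOn (fun k => ((∑ j ∈ Icc 1 k, (a j + 1) : ℕ) : ZMod p)) (range p)) :
    p ∣ ∑ j ∈ Icc 1 (p - 1), j * a j := by
  have hS (k : ℕ) : ∑ j ∈ Icc 1 k, (a j + 1) = ∑ j ∈ Icc 1 k, a j + k := by
    simp [sum_add_distrib]
  have hperm : ∑ k ∈ range p, ((∑ j ∈ Icc 1 k, (a j + 1) : ℕ) : ZMod p) =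
      ∑ k ∈ range p, (k : ZMod p) := by
    rw [sum_eq_sum_univ_of_injOn h (by simp),
      sum_eq_sum_univ_of_injOn (ZMod.natCast_injOn_range p) (by simp)]
  have hT : ∑ k ∈ range p, ((∑ j ∈ Icc 1 k, a j : ℕ) : ZMod p) = 0 := by
    simpa only [hS, Nat.cast_add, sum_add_distrib, add_eq_right] using hperm
  have habel := sum_range_sum_Icc_add_sum_Icc_nsmul a (p - 1)
  rw [Nat.sub_add_cancel NeZero.one_le] at habel
  have hcast := congrArg (Nat.cast : ℕ → ZMod p) habel
  push_cast at hT hcast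
  rw [← ZMod.natCast_eq_zero_iff]
  simpa [hT] using hcast

theorem dvd_weyl_numerator_of_not_injOn
    (h : ¬ Set.InjOn (fun k => ((∑ j ∈ Icc 1 k, (a j + 1) : ℕ) : ZMod p)) (range p)) :
    p ∣ ∏ v ∈ range p, ∏ u ∈ range v, ∑ j ∈ Icc (u + 1) v, (a j + 1) := by
  obtain ⟨u, hu, v, hv, hcast, hne⟩ : ∃ u ∈ range p, ∃ v ∈ range p,
      ((∑ j ∈ Icc 1 u, (a j + 1) : ℕ) : ZMod p) = ((∑ j ∈ Icc 1 v, (a j + 1) : ℕ) : ZMod p) ∧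
        u ≠ v := by
    simpa [Set.InjOn] using h
  wlog hlt : u < v generalizing u v
  · exact this v hv u hu hcast.symm hne.symm (by omega)
  have hfactor : p ∣ ∑ j ∈ Icc (u + 1) v, (a j + 1) := by
    rw [← ZMod.natCast_eq_zero_iff]
    simpa [← sum_Icc_one_add_sum_Icc_succ _ hlt.le] using hcast
  exact hfactor.trans <|
    (dvd_prod_of_mem (fun u => ∑ j ∈ Icc (u + 1) v, (a j + 1)) (mem_range.2 hlt)).trans
      (dvd_prod_of_mem (fun v => ∏ u ∈ range v, ∑ j ∈ Icc (u + 1) v, (a j + 1)) hv)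

end

theorem prime_divides_size_mul_weyl_numerator_general (p : ℕ) (a : ℕ → ℕ) :
    p ∣ (∑ j ∈ Icc 1 (p - 1), j * a j) *
      ∏ v ∈ range p, ∏ u ∈ range v, ∑ j ∈ Icc (u + 1) v, (a j + 1) := by
  rcases p.eq_zero_or_pos with rfl | hp
  · simp
  have : NeZero p := ⟨hp.ne'⟩
  by_cases h : Set.InjOn (fun k => ((∑ j ∈ Icc 1 k, (a j + 1) : ℕ) : ZMod p)) (range p)
  · exact (dvd_size_of_injOn p a h).mul_right _
  · exact (dvd_weyl_numerator_of_not_injOn p a h).mul_left _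

/-- **Key divisibility claim in the proof of Theorem 4.4.**
For a prime `p` and Dynkin indices `a₁,…,a_{p-1}`, the prime `p` divides the product of the
representation size `∑_{j=1}^{p-1} j·a_j` with the numerator
`∏_{0 ≤ u < v ≤ p-1} ∑_{j=u+1}^{v} (a_j + 1)` of the Weyl dimension formula. -/
theorem prime_divides_size_mul_weyl_numerator (p : ℕ) (hp : p.Prime) (a : ℕ → ℕ) :
    p ∣ (∑ j ∈ Icc 1 (p - 1), j * a j) *
      ∏ v ∈ range p, ∏ u ∈ range v, ∑ j ∈ Icc (u + 1) v, (a j + 1) :=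
  prime_divides_size_mul_weyl_numerator_general p a
end

section
/- Let λ, r_T, r_C be integers with λ ≡ r_T (mod 2) and λ ≡ r_C (mod 3). Then r_C ≡ 0 (mod 3) holds if and only if for every integer s with s ≡ r_T (mod 2) the rational number λ/6 + s/2 is an integer. -/
/-- **Lemma 4.1 (quarkconfinlem).**
For a representation of `G_SM` with winding number `λ` (hypercharge `y = λ/6`), isospin size
`r_T` and colour size `r_C` satisfying the integrability conditions `λ ≡ r_T (mod 2)` and
`λ ≡ r_C (mod 3)`, the condition `r_C ≡ 0 (mod 3)` holds iff every electric charge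
`q = λ/6 + t₃` (where `t₃ = s/2` ranges over the half-integers with `s ≡ r_T (mod 2)`)
is an integer. -/
theorem quark_confinement_integer_charge (lam rT rC : ℤ)
    (h2 : lam ≡ rT [ZMOD 2]) (h3 : lam ≡ rC [ZMOD 3]) :
    rC ≡ 0 [ZMOD 3] ↔
      ∀ s : ℤ, s ≡ rT [ZMOD 2] → ∃ k : ℤ, (lam : ℚ) / 6 + (s : ℚ) / 2 = (k : ℚ) := by
  have h2' : lam % 2 = rT % 2 := h2
  have h3' : lam % 3 = rC % 3 := h3
  constructor
  · intro h s hs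
    have h0 : rC % 3 = 0 % 3 := h
    have hs' : s % 2 = rT % 2 := hs
    obtain ⟨k, hk⟩ : (6:ℤ) ∣ lam + 3*s := by omega
    refine ⟨k, ?_⟩
    have : (lam : ℚ) + 3 * s = 6 * k := by exact_mod_cast congrArg (Int.cast : ℤ → ℚ) hk
    linarith
  · intro h
    obtain ⟨k, hk⟩ := h rT (Int.ModEq.refl rT)
    have hq : (lam : ℚ) + 3 * rT = 6 * k := by linarith
    have hz : lam + 3 * rT = 6 * k := by exact_mod_cast hq
    show rC % 3 = 0 % 3
    omega
end

section
/- Let i, j, r_T be nonnegative integers and λ an integer with λ ≡ r_T (mod 2) and λ ≡ i + 2j (mod 3). Then 12 divides λ·(r_T + 1)·(i + 1)·(j + 1)·(i + j + 2); equivalently, 6 divides λ·d_T·d_C, where d_T = r_T + 1 is the dimension of the irreducible SU(2)-representation of size r_T and d_C = (i+1)(j+1)(i+j+2)/2 is the dimension of the irreducible SU(3)-representation with Dynkin indices (i, j). -/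
/-- **Corollary 4.5 (teilerdimSM).**
For an irreducible representation of the Standard Model group `G_SM` with winding number `λ`,
`SU(2)` Dynkin index `r_T` and `SU(3)` Dynkin indices `(i, j)` (so colour size `r_C = i + 2j`),
the integrability conditions `λ ≡ r_T (mod 2)` and `λ ≡ i + 2j (mod 3)` imply
`12 ∣ λ·(r_T+1)·(i+1)·(j+1)·(i+j+2)`, i.e. `6 ∣ λ·d_T·d_C`: the total electric charge
`y·d_T·d_C = λ·d_T·d_C/6` of the multiplet is an integer. -/
theorem sum_of_electric_charges_integral (i j rT : ℕ) (lam : ℤ)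
    (h2 : lam ≡ (rT : ℤ) [ZMOD 2]) (h3 : lam ≡ ((i : ℤ) + 2 * (j : ℤ)) [ZMOD 3]) :
    (12 : ℤ) ∣ lam * ((rT : ℤ) + 1) * ((i : ℤ) + 1) * ((j : ℤ) + 1) * ((i : ℤ) + (j : ℤ) + 2) := by
  have h2' : lam % 2 = (rT : ℤ) % 2 := h2
  have h3' : lam % 3 = ((i : ℤ) + 2 * (j : ℤ)) % 3 := h3
  have hA : (2 : ℤ) ∣ lam ∨ (2 : ℤ) ∣ ((rT : ℤ) + 1) := by omega
  have hB : (2 : ℤ) ∣ ((i : ℤ) + 1) ∨ (2 : ℤ) ∣ ((j : ℤ) + 1) ∨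
      (2 : ℤ) ∣ ((i : ℤ) + (j : ℤ) + 2) := by omega
  have hC : (3 : ℤ) ∣ lam ∨ (3 : ℤ) ∣ ((i : ℤ) + 1) ∨ (3 : ℤ) ∣ ((j : ℤ) + 1) ∨
      (3 : ℤ) ∣ ((i : ℤ) + (j : ℤ) + 2) := by
    have hi : (i : ℤ) % 3 = 0 ∨ (i : ℤ) % 3 = 1 ∨ (i : ℤ) % 3 = 2 := by omega
    have hj : (j : ℤ) % 3 = 0 ∨ (j : ℤ) % 3 = 1 ∨ (j : ℤ) % 3 = 2 := by omega
    rcases hi with hi | hi | hi <;> rcases hj with hj | hj | hj <;> omega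
  have h4 : (4 : ℤ) ∣ lam * ((rT : ℤ) + 1) * ((i : ℤ) + 1) * ((j : ℤ) + 1) *
      ((i : ℤ) + (j : ℤ) + 2) := by
    have hA' : (2 : ℤ) ∣ lam * ((rT : ℤ) + 1) := by
      rcases hA with h | h
      · exact h.mul_right _
      · exact h.mul_left _
    have hB' : (2 : ℤ) ∣ ((i : ℤ) + 1) * ((j : ℤ) + 1) * ((i : ℤ) + (j : ℤ) + 2) := by
      rcases hB with h | h | h
      · exact (h.mul_right _).mul_right _
      · exact (h.mul_left _).mul_right _
      · exact h.mul_left _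
    have := mul_dvd_mul hA' hB'
    have heq : lam * ((rT : ℤ) + 1) * ((i : ℤ) + 1) * ((j : ℤ) + 1) *
        ((i : ℤ) + (j : ℤ) + 2) =
        (lam * ((rT : ℤ) + 1)) * (((i : ℤ) + 1) * ((j : ℤ) + 1) *
        ((i : ℤ) + (j : ℤ) + 2)) := by ring
    rw [heq]
    exact this
  have h3d : (3 : ℤ) ∣ lam * ((rT : ℤ) + 1) * ((i : ℤ) + 1) * ((j : ℤ) + 1) *
      ((i : ℤ) + (j : ℤ) + 2) := by
    rcases hC with h | h | h | h
    · exact ((((h.mul_right _).mul_right _).mul_right _).mul_right _)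
    · exact (((h.mul_left _).mul_right _).mul_right _)
    · exact ((h.mul_left _).mul_right _)
    · exact h.mul_left _
  have hcop : IsCoprime (4 : ℤ) 3 := by
    rw [Int.isCoprime_iff_gcd_eq_one]; norm_num
  have := hcop.mul_dvd h4 h3d
  norm_num at this
  exact this
end

section
/- Let p and q be distinct primes. Consider the group homomorphism Φ from U(1) × SU(p) × SU(q) to the unitary group of pq×pq complex matrices given by Φ(c, g, h) = c·(g ⊗ h), where ⊗ is the Kronecker product. Then the kernel of Φ is exactly the cyclic subgroup generated by the element (ζ_p^{-1}·ζ_q^{-1}, ζ_p·1_p, ζ_q·1_q); consequently, the quotient group G_SM(p,q) = (U(1)×SU(p)×SU(q))/⟨(ζ_p^{-1}ζ_q^{-1}, ζ_p·1_p, ζ_q·1_q)⟩ is isomorphic to the image of Φ. -/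
/-!
If `c • (g ⊗ₖ h) = 1`, comparing entries of the Kronecker product forces `g = a • 1` and
`h = b • 1` with `c a b = 1`. Since `det g = det h = 1`, `a` is a `p`-th and `b` a `q`-th root of
unity, and as `p` and `q` are coprime the Chinese remainder theorem writes them as `ζ_p ^ k` and
`ζ_q ^ k` for a single exponent `k`; then `c = (ζ_p⁻¹ ζ_q⁻¹) ^ k`. The isomorphism with the image
is the first isomorphism theorem.
-/

open scoped Kronecker

/-- `ζ n = exp(2πi/n)`, the standard primitive `n`-th root of unity in `ℂ`. -/
noncomputable def zeta (n : ℕ) : ℂ := Complex.exp (2 * Real.pi * Complex.I / n)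

/-- The special unitary group `SU(n)`, as the subgroup of the unitary group
`Matrix.unitaryGroup n ℂ` consisting of the matrices of determinant `1`. -/
noncomputable def SU (n : Type*) [DecidableEq n] [Fintype n] :
    Subgroup (Matrix.unitaryGroup n ℂ) :=
  MonoidHom.ker ((Units.map (Matrix.detMonoidHom : Matrix n n ℂ →* ℂ)).comp Unitary.toUnits)

namespace Matrix

variable {R m n : Type*} [CommSemiring R] [DecidableEq m] [DecidableEq n]

theorem exists_eq_smul_one_of_smul_kronecker_eq_one [Nonempty m] [Nonempty n] {c : R}
    {A : Matrix m m R} {B : Matrix n n R} (h : c • (A ⊗ₖ B) = 1) :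
    ∃ a b : R, A = a • 1 ∧ B = b • 1 ∧ c * a * b = 1 := by
  rw [← one_kronecker_one] at h
  have entry (i i' : m) (j j' : n) :
      c * (A i i' * B j j') = (1 : Matrix m m R) i i' * (1 : Matrix n n R) j j' := by
    simpa using congr_fun₂ h (i, j) (i', j')
  obtain ⟨i₀⟩ := ‹Nonempty m›
  obtain ⟨j₀⟩ := ‹Nonempty n›
  have hc : c * A i₀ i₀ * B j₀ j₀ = 1 := by simpa [mul_assoc] using entry i₀ i₀ j₀ j₀
  refine ⟨A i₀ i₀, B j₀ j₀, ?_, ?_, hc⟩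
  · ext i i'
    calc A i i' = A i i' * (c * A i₀ i₀ * B j₀ j₀) := by rw [hc, mul_one]
      _ = c * (A i i' * B j₀ j₀) * A i₀ i₀ := by ring
      _ = (A i₀ i₀ • (1 : Matrix m m R)) i i' := by simp [entry, mul_comm]
  · ext j j'
    calc B j j' = B j j' * (c * A i₀ i₀ * B j₀ j₀) := by rw [hc, mul_one]
      _ = c * (A i₀ i₀ * B j j') * B j₀ j₀ := by ring
      _ = (B j₀ j₀ • (1 : Matrix n n R)) j j' := by simp [entry, mul_comm]

end Matrix

theorem IsPrimitiveRoot.exists_pow_eq_and_pow_eq_of_coprime {R : Type*} [CommRing R] [IsDomain R]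
    {p q : ℕ} [NeZero p] [NeZero q] {ζ ξ a b : R} (hζ : IsPrimitiveRoot ζ p)
    (hξ : IsPrimitiveRoot ξ q) (hpq : p.Coprime q) (ha : a ^ p = 1) (hb : b ^ q = 1) :
    ∃ k : ℕ, ζ ^ k = a ∧ ξ ^ k = b := by
  obtain ⟨i, -, rfl⟩ := hζ.eq_pow_of_pow_eq_one ha
  obtain ⟨j, -, rfl⟩ := hξ.eq_pow_of_pow_eq_one hb
  obtain ⟨k, hki, hkj⟩ := Nat.chineseRemainder hpq i j
  refine ⟨k, ?_, ?_⟩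
  · rw [(hζ.isOfFinOrder (NeZero.ne p)).pow_eq_pow_iff_modEq, ← hζ.eq_orderOf]
    exact hki
  · rw [(hξ.isOfFinOrder (NeZero.ne q)).pow_eq_pow_iff_modEq, ← hξ.eq_orderOf]
    exact hkj

theorem Circle.coe_mem_unitary (z : Circle) : (z : ℂ) ∈ unitary ℂ := by
  rw [Unitary.mem_iff_star_mul_self, Complex.star_def, Complex.conj_mul', Circle.norm_coe]
  norm_num

open Matrix

noncomputable def Matrix.kroneckerUnitaryHom (m n : Type*) [Fintype m] [DecidableEq m]
    [Fintype n] [DecidableEq n] :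
    Circle × unitaryGroup m ℂ × unitaryGroup n ℂ →* unitaryGroup (m × n) ℂ where
  toFun x := ⟨(x.1 : ℂ) • ((x.2.1 : Matrix m m ℂ) ⊗ₖ (x.2.2 : Matrix n n ℂ)),
    Unitary.smul_mem_of_mem x.1.coe_mem_unitary (kronecker_mem_unitary x.2.1.2 x.2.2.2)⟩
  map_one' := by ext1; simp
  map_mul' x y := Subtype.ext <| by
    show ((x.1 * y.1 : Circle) : ℂ) • ((x.2.1 * y.2.1).1 ⊗ₖ (x.2.2 * y.2.2).1) =
      ((x.1 : ℂ) • (x.2.1.1 ⊗ₖ x.2.2.1)) * ((y.1 : ℂ) • (y.2.1.1 ⊗ₖ y.2.2.1))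
    rw [Circle.coe_mul, UnitaryGroup.mul_val, UnitaryGroup.mul_val, mul_kronecker_mul,
      smul_mul_smul_comm]

theorem det_eq_one_of_mem_SU {n : Type*} [DecidableEq n] [Fintype n] {g : unitaryGroup n ℂ}
    (hg : g ∈ SU n) : (g : Matrix n n ℂ).det = 1 := by
  simpa [SU] using congr_arg Units.val hg

theorem isPrimitiveRoot_zeta (n : ℕ) [NeZero n] : IsPrimitiveRoot (zeta n) n :=
  Complex.isPrimitiveRoot_exp n (NeZero.ne n)

noncomputable def gsmKroneckerHom (p q : ℕ) :
    Circle × SU (Fin p) × SU (Fin q) →* unitaryGroup (Fin p × Fin q) ℂ :=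
  (kroneckerUnitaryHom (Fin p) (Fin q)).comp
    ((MonoidHom.id Circle).prodMap ((SU (Fin p)).subtype.prodMap (SU (Fin q)).subtype))

theorem mem_ker_gsmKroneckerHom_iff {p q : ℕ} [NeZero p] [NeZero q] (hpq : p.Coprime q)
    (x : Circle × SU (Fin p) × SU (Fin q)) :
    x ∈ (gsmKroneckerHom p q).ker ↔ ∃ k : ℤ,
      (x.1 : ℂ) = ((zeta p)⁻¹ * (zeta q)⁻¹) ^ k ∧
      ((x.2.1 : unitaryGroup (Fin p) ℂ) : Matrix (Fin p) (Fin p) ℂ) = zeta p ^ k • 1 ∧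
      ((x.2.2 : unitaryGroup (Fin q) ℂ) : Matrix (Fin q) (Fin q) ℂ) = zeta q ^ k • 1 := by
  obtain ⟨c, g, h⟩ := x
  have hker : (c, g, h) ∈ (gsmKroneckerHom p q).ker ↔
      (c : ℂ) • ((g : Matrix (Fin p) (Fin p) ℂ) ⊗ₖ (h : Matrix (Fin q) (Fin q) ℂ)) = 1 := by
    rw [MonoidHom.mem_ker, ← Subtype.coe_inj]
    rfl
  rw [hker]
  constructor
  · intro hc
    obtain ⟨a, b, hA, hB, hcab⟩ := exists_eq_smul_one_of_smul_kronecker_eq_one hc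
    have ha : a ^ p = 1 := by simpa [hA] using det_eq_one_of_mem_SU g.2
    have hb : b ^ q = 1 := by simpa [hB] using det_eq_one_of_mem_SU h.2
    obtain ⟨k, hka, hkb⟩ := (isPrimitiveRoot_zeta p).exists_pow_eq_and_pow_eq_of_coprime
      (isPrimitiveRoot_zeta q) hpq ha hb
    refine ⟨k, ?_, by simp [hA, hka], by simp [hB, hkb]⟩
    rw [zpow_natCast, mul_pow, inv_pow, inv_pow, hka, hkb, ← mul_inv]
    exact eq_inv_of_mul_eq_one_left (by rwa [← mul_assoc])
  · rintro ⟨k, hc, hA, hB⟩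
    rw [hc, hA, hB, smul_kronecker, kronecker_smul, one_kronecker_one, smul_smul, smul_smul,
      mul_zpow, _root_.inv_zpow, _root_.inv_zpow]
    field_simp [(isPrimitiveRoot_zeta p).ne_zero (NeZero.ne p),
      (isPrimitiveRoot_zeta q).ne_zero (NeZero.ne q)]
    simp

/-- **Multiplicative (Kronecker) realization of `G_SM(p,q)` (Section 5.2).**
For distinct primes `p`, `q` there is a group homomorphism
`Φ : U(1) × SU(p) × SU(q) →* U(pq)`, `Φ(c, g, h) = c • (g ⊗ₖ h)`, whose kernel is exactly the
cyclic subgroup generated by `(ζ_p⁻¹ ζ_q⁻¹, ζ_p·1_p, ζ_q·1_q)` (described below by the set of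
its integer powers); consequently `G_SM(p,q)`, the quotient by this kernel, is isomorphic to
the image of `Φ`. -/
theorem kronecker_realization_of_GSM (p q : ℕ) (hp : p.Prime) (hq : q.Prime) (hpq : p ≠ q) :
    ∃ Φ : (Circle × SU (Fin p) × SU (Fin q)) →* Matrix.unitaryGroup (Fin p × Fin q) ℂ,
      (∀ x : Circle × SU (Fin p) × SU (Fin q),
        (Φ x : Matrix (Fin p × Fin q) (Fin p × Fin q) ℂ) =
          (x.1 : ℂ) •
            (((x.2.1 : Matrix.unitaryGroup (Fin p) ℂ) : Matrix (Fin p) (Fin p) ℂ) ⊗ₖ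
              ((x.2.2 : Matrix.unitaryGroup (Fin q) ℂ) : Matrix (Fin q) (Fin q) ℂ))) ∧
      (∀ x : Circle × SU (Fin p) × SU (Fin q),
        x ∈ Φ.ker ↔ ∃ k : ℤ,
          (x.1 : ℂ) = ((zeta p)⁻¹ * (zeta q)⁻¹) ^ k ∧
          ((x.2.1 : Matrix.unitaryGroup (Fin p) ℂ) : Matrix (Fin p) (Fin p) ℂ) =
            zeta p ^ k • (1 : Matrix (Fin p) (Fin p) ℂ) ∧
          ((x.2.2 : Matrix.unitaryGroup (Fin q) ℂ) : Matrix (Fin q) (Fin q) ℂ) =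
            zeta q ^ k • (1 : Matrix (Fin q) (Fin q) ℂ)) ∧
      Nonempty (((Circle × SU (Fin p) × SU (Fin q)) ⧸ Φ.ker) ≃* Φ.range) := by
  have : NeZero p := ⟨hp.ne_zero⟩
  have : NeZero q := ⟨hq.ne_zero⟩
  exact ⟨gsmKroneckerHom p q, fun _ => rfl,
    mem_ker_gsmKroneckerHom_iff ((Nat.coprime_primes hp hq).2 hpq),
    ⟨QuotientGroup.quotientKerEquivRange _⟩⟩
end
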